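/- arXiv:2505.17969 — 5 statements merged into one kernel-verified Lean document; each statement's English description precedes it below -/
import Mathlib

section
/- For every fixed integer j ≥ 1, the staggered centred finite-difference coefficients Č_N^j := (−1)^{j+1}·4^{1−2N}·((2N)!)² / ((2j−1)·(N!)²·(N+j−1)!·(N−j)!) converge, as N → ∞, to Č_∞^j = 4·(−1)^{j+1} / ((2j−1)·π). -/
open Filter Topology

/-- The coefficient `Č_N^j := (−1)^{j+1}·4^{1−2N}·((2N)!)² /
((2j−1)·(N!)²·(N+j−1)!·(N−j)!)` of the `2N`-th order staggered centred
finite-difference approximation of the first derivative. -/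
noncomputable def staggeredCentredCoeff (N j : ℕ) : ℝ :=
  (-1) ^ (j + 1) * (4 : ℝ) ^ ((1 : ℤ) - 2 * (N : ℤ)) * ((2 * N).factorial : ℝ) ^ 2 /
    (((2 * j - 1 : ℕ) : ℝ) * (N.factorial : ℝ) ^ 2 * (N + j - 1).factorial *
      (N - j).factorial)

section AuxStaggered
open Real

lemma keyA (N : ℕ) (hN : 1 ≤ N) :
    (N : ℝ) * (((2 * N).factorial : ℝ) / (4 ^ N * (N.factorial : ℝ) ^ 2)) ^ 2 =
      (Stirling.stirlingSeq (2 * N) / (Stirling.stirlingSeq N) ^ 2) ^ 2 := by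
  have hN0 : (0:ℝ) < N := by exact_mod_cast hN
  have h1 : (Real.sqrt (2 * (2 * N : ℕ) : ℝ)) ^ 2 = (2 * (2 * N : ℕ) : ℝ) :=
    Real.sq_sqrt (by positivity)
  have h2 : (Real.sqrt (2 * (N : ℕ) : ℝ)) ^ 2 = (2 * (N : ℕ) : ℝ) :=
    Real.sq_sqrt (by positivity)
  have hf1 : ((N.factorial : ℝ)) ≠ 0 := by exact_mod_cast N.factorial_ne_zero
  have hf2 : (((2*N).factorial : ℝ)) ≠ 0 := by exact_mod_cast (2*N).factorial_ne_zero
  have he : Real.exp 1 ≠ 0 := Real.exp_ne_zero 1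
  have hs1 : Real.sqrt (2 * (2 * N : ℕ) : ℝ) ≠ 0 := by
    rw [← pow_ne_zero_iff (n := 2) two_ne_zero, h1]; positivity
  have hs2 : Real.sqrt (2 * (N : ℕ) : ℝ) ≠ 0 := by
    rw [← pow_ne_zero_iff (n := 2) two_ne_zero, h2]; positivity
  rw [Stirling.stirlingSeq, Stirling.stirlingSeq]
  have h2' : (Real.sqrt (2 * (N : ℕ) : ℝ)) ^ 4 = (2 * (N : ℕ) : ℝ) ^ 2 := by
    rw [show (4 : ℕ) = 2 * 2 from rfl, pow_mul, h2]
  field_simp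
  ring_nf
  have e1 : Real.sqrt (N:ℝ) ^ 2 = (N:ℝ) := Real.sq_sqrt N.cast_nonneg
  have e2 : Real.sqrt (N:ℝ) ^ 4 = (N:ℝ) ^ 2 := by
    rw [show (4 : ℕ) = 2 * 2 from rfl, pow_mul, e1]
  have e3 : Real.exp ((N:ℝ) * 2) = Real.exp (N:ℝ) ^ 2 := by
    rw [show ((N:ℝ) * 2) = (N:ℝ) + (N:ℝ) by ring, Real.exp_add, sq]
  have e4 : (2:ℝ) ^ (N*4) = 4 ^ (N*2) := by
    rw [show (4:ℝ) = 2^2 by norm_num, ← pow_mul, show 2*(N*2) = N*4 by ring]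
  have s1 : Real.sqrt (((N*2 : ℕ) : ℝ) * 2) ^ 2 = ((N*2 : ℕ) : ℝ) * 2 := Real.sq_sqrt (by positivity)
  have s2 : Real.sqrt ((N:ℝ) * 2) ^ 4 = ((N:ℝ) * 2) ^ 2 := by
    rw [show (4 : ℕ) = 2 * 2 from rfl, pow_mul, Real.sq_sqrt (by positivity)]
  rw [s1, s2, ← e4]
  push_cast
  ring

lemma tendstoA :
    Tendsto (fun N : ℕ => (N : ℝ) * (((2 * N).factorial : ℝ) / (4 ^ N * (N.factorial : ℝ) ^ 2)) ^ 2)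
      atTop (𝓝 (1 / Real.pi)) := by
  have h2 : Tendsto (fun N : ℕ => 2 * N) atTop atTop :=
    tendsto_atTop_mono (fun n : ℕ => Nat.le_mul_of_pos_left n two_pos) tendsto_id
  have hs2 : Tendsto (fun N : ℕ => Stirling.stirlingSeq (2 * N)) atTop (𝓝 (Real.sqrt Real.pi)) :=
    Stirling.tendsto_stirlingSeq_sqrt_pi.comp h2
  have hs1 : Tendsto (fun N : ℕ => (Stirling.stirlingSeq N) ^ 2) atTop (𝓝 ((Real.sqrt Real.pi) ^ 2)) :=
    Stirling.tendsto_stirlingSeq_sqrt_pi.pow 2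
  have hpi : (Real.sqrt Real.pi) ^ 2 = Real.pi := Real.sq_sqrt Real.pi_pos.le
  have hlim : Tendsto (fun N : ℕ => (Stirling.stirlingSeq (2 * N) / (Stirling.stirlingSeq N) ^ 2) ^ 2)
      atTop (𝓝 ((Real.sqrt Real.pi / (Real.sqrt Real.pi) ^ 2) ^ 2)) :=
    (hs2.div hs1 (by rw [hpi]; exact Real.pi_ne_zero)).pow 2
  have hval : ((Real.sqrt Real.pi / (Real.sqrt Real.pi) ^ 2) ^ 2) = 1 / Real.pi := by
    rw [div_pow, hpi]
    field_simp
  rw [← hval]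
  apply hlim.congr'
  filter_upwards [eventually_ge_atTop 1] with N hN
  exact (keyA N hN).symm

lemma tendsto_ratio (j : ℕ) :
    Tendsto (fun N : ℕ => ((N : ℝ) - j) / ((N : ℝ) + j)) atTop (𝓝 1) := by
  have h0 : Tendsto (fun N : ℕ => (2 * j : ℝ) / ((N : ℝ) + j)) atTop (𝓝 0) :=
    Tendsto.div_atTop tendsto_const_nhds
      (tendsto_atTop_add_const_right atTop (j : ℝ) tendsto_natCast_atTop_atTop)
  have h1 : Tendsto (fun N : ℕ => 1 - (2 * j : ℝ) / ((N : ℝ) + j)) atTop (𝓝 (1 - 0)) :=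
    tendsto_const_nhds.sub h0
  rw [sub_zero] at h1
  apply h1.congr'
  filter_upwards [eventually_ge_atTop 1] with N hN
  have hNj : ((N : ℝ) + j) ≠ 0 := by positivity
  field_simp
  ring

lemma tendstoB (j : ℕ) (hj : 1 ≤ j) :
    Tendsto (fun N : ℕ => (N.factorial : ℝ) ^ 2 /
      ((N : ℝ) * ((N + j - 1).factorial : ℝ) * ((N - j).factorial : ℝ))) atTop (𝓝 1) := by
  induction j, hj using Nat.le_induction with
  | base =>
    apply tendsto_const_nhds.congr'
    filter_upwards [eventually_ge_atTop 1] with N hN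
    have h1 : N + 1 - 1 = N := by omega
    have h2 : (N : ℝ) * ((N - 1).factorial : ℝ) = (N.factorial : ℝ) := by
      rw [← Nat.cast_mul, Nat.mul_factorial_pred (by omega)]
    have hf : (N.factorial : ℝ) ≠ 0 := by exact_mod_cast N.factorial_ne_zero
    rw [h1, show (N : ℝ) * (N.factorial : ℝ) * ((N - 1).factorial : ℝ)
        = (N.factorial : ℝ) * ((N : ℝ) * ((N - 1).factorial : ℝ)) by ring, h2, ← sq,
      div_self (pow_ne_zero 2 hf)]
  | succ j hj ih =>
    have key : ∀ᶠ N : ℕ in atTop,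
        (fun N : ℕ => (N.factorial : ℝ) ^ 2 /
          ((N : ℝ) * ((N + j - 1).factorial : ℝ) * ((N - j).factorial : ℝ)) *
          (((N : ℝ) - j) / ((N : ℝ) + j))) N =
        (N.factorial : ℝ) ^ 2 /
          ((N : ℝ) * ((N + (j + 1) - 1).factorial : ℝ) * ((N - (j + 1)).factorial : ℝ)) := by
      filter_upwards [eventually_ge_atTop (j + 1)] with N hN
      have e1 : N + (j + 1) - 1 = N + j := by omega
      have e2 : ((N + j).factorial : ℝ) = ((N : ℝ) + j) * ((N + j - 1).factorial : ℝ) := by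
        rw [← Nat.cast_add, ← Nat.cast_mul]
        norm_cast
        rw [Nat.mul_factorial_pred (by omega)]
      have e3 : ((N - j).factorial : ℝ) = ((N : ℝ) - j) * ((N - (j + 1)).factorial : ℝ) := by
        have : ((N - j : ℕ) : ℝ) = (N : ℝ) - j := by
          rw [Nat.cast_sub (by omega)]
        rw [← this, ← Nat.cast_mul]
        norm_cast
        rw [show N - (j+1) = (N - j) - 1 by omega, Nat.mul_factorial_pred (by omega)]
      have hN0 : (N : ℝ) ≠ 0 := (Nat.cast_pos.mpr (by omega : 0 < N)).ne'
      have hNj : ((N : ℝ) - j) ≠ 0 := by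
        have : (j : ℝ) < N := by exact_mod_cast (by omega : j < N)
        linarith
      have hNj' : ((N : ℝ) + j) ≠ 0 := by positivity
      have hf1 : ((N + j - 1).factorial : ℝ) ≠ 0 := by
        exact_mod_cast (N + j - 1).factorial_ne_zero
      have hf2 : ((N - (j + 1)).factorial : ℝ) ≠ 0 := by
        exact_mod_cast (N - (j + 1)).factorial_ne_zero
      rw [e1, e2, e3]
      field_simp
    have := (ih.mul (tendsto_ratio j)).congr' key
    rwa [mul_one] at this

end AuxStaggered

set_option maxHeartbeats 1000000

/-- For every fixed integer `j ≥ 1`, the staggered centred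
finite-difference coefficients `Č_N^j` converge, as `N → ∞`, to
`Č_∞^j = 4·(−1)^{j+1} / ((2j−1)·π)`. -/
theorem staggeredCentredCoeff_tendsto (j : ℕ) (hj : 1 ≤ j) :
    Tendsto (fun N : ℕ => staggeredCentredCoeff N j) atTop
      (𝓝 (4 * (-1) ^ (j + 1) / (((2 * j - 1 : ℕ) : ℝ) * Real.pi))) := by
  have hc : ((2 * j - 1 : ℕ) : ℝ) ≠ 0 := by
    have : 1 ≤ 2 * j - 1 := by omega
    exact_mod_cast (by omega : 2 * j - 1 ≠ 0)
  set c : ℝ := (-1) ^ (j + 1) * 4 / ((2 * j - 1 : ℕ) : ℝ) with hcdef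
  have hmain : Tendsto (fun N : ℕ => c *
      ((N : ℝ) * (((2 * N).factorial : ℝ) / (4 ^ N * (N.factorial : ℝ) ^ 2)) ^ 2 *
        ((N.factorial : ℝ) ^ 2 /
          ((N : ℝ) * ((N + j - 1).factorial : ℝ) * ((N - j).factorial : ℝ)))))
      atTop (𝓝 (c * (1 / Real.pi * 1))) :=
    (tendstoA.mul (tendstoB j hj)).const_mul c
  have hval : c * (1 / Real.pi * 1) = 4 * (-1) ^ (j + 1) / (((2 * j - 1 : ℕ) : ℝ) * Real.pi) := by
    rw [hcdef]
    field_simp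
  rw [hval] at hmain
  apply hmain.congr'
  filter_upwards [eventually_ge_atTop j] with N hN
  have hN1 : 1 ≤ N := le_trans hj hN
  have hN0 : (N : ℝ) ≠ 0 := (Nat.cast_pos.mpr (by omega : 0 < N)).ne'
  have hf1 : (N.factorial : ℝ) ≠ 0 := by exact_mod_cast N.factorial_ne_zero
  have hf2 : ((N + j - 1).factorial : ℝ) ≠ 0 := by exact_mod_cast (N + j - 1).factorial_ne_zero
  have hf3 : ((N - j).factorial : ℝ) ≠ 0 := by exact_mod_cast (N - j).factorial_ne_zero
  have h4 : ((4 : ℝ) ^ N) ≠ 0 := by positivity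
  have hz : (4 : ℝ) ^ ((1 : ℤ) - 2 * (N : ℤ)) = 4 / ((4 : ℝ) ^ N) ^ 2 := by
    have he : ((1 : ℤ) - 2 * (N : ℤ)) = 1 - ((2 * N : ℕ) : ℤ) := by push_cast; ring
    rw [he, zpow_sub₀ (by norm_num : (4:ℝ) ≠ 0), zpow_one, zpow_natCast, pow_mul']
  rw [staggeredCentredCoeff, hz, hcdef]
  generalize ((2 * j - 1 : ℕ) : ℝ) = K at hc ⊢
  field_simp
end

section
/- For every real X with |X| ≤ 1, log((1 + √(1 + X²))/2) = ∑_{ℓ=1}^{∞} (−1)^{ℓ+1} · (2ℓ)! · X^{2ℓ} / (4^{ℓ} · (ℓ!)² · 2ℓ), the series converging absolutely. -/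
set_option maxHeartbeats 1000000

open Real Set

lemma cb_sq (n : ℕ) : (3*n+1) * Nat.centralBinom n ^ 2 ≤ 16 ^ n := by
  induction n with
  | zero => simp [Nat.centralBinom]
  | succ n ih =>
    have key := Nat.succ_mul_centralBinom_succ n
    have h1 : (n+1)^2 * ((3*(n+1)+1) * Nat.centralBinom (n+1) ^ 2)
        = (3*n+4)*4*(2*n+1)^2 * Nat.centralBinom n ^ 2 := by
      have : ((n+1) * Nat.centralBinom (n+1))^2 = (2*(2*n+1) * Nat.centralBinom n)^2 := by
        rw [key]
      nlinarith [this]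
    have h2 : (3*n+4)*4*(2*n+1)^2 ≤ 16*(n+1)^2*(3*n+1) := by nlinarith
    have h3 : (n+1)^2 * ((3*(n+1)+1) * Nat.centralBinom (n+1) ^ 2) ≤ (n+1)^2 * 16^(n+1) := by
      rw [h1]
      calc (3*n+4)*4*(2*n+1)^2 * Nat.centralBinom n ^ 2
          ≤ 16*(n+1)^2*(3*n+1) * Nat.centralBinom n ^ 2 := Nat.mul_le_mul_right _ h2
        _ = 16*(n+1)^2 * ((3*n+1) * Nat.centralBinom n ^ 2) := by ring
        _ ≤ 16*(n+1)^2 * 16^n := Nat.mul_le_mul_left _ ih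
        _ = (n+1)^2 * 16^(n+1) := by ring
    exact Nat.le_of_mul_le_mul_left h3 (by positivity)

noncomputable def cc (n : ℕ) : ℝ := (-1)^n * (Nat.centralBinom n) / 4^n

lemma cc_rec (n : ℕ) : ((n:ℝ)+1) * cc (n+1) = -(((n:ℝ) + 1/2)) * cc n := by
  have key : ((n:ℝ)+1) * (Nat.centralBinom (n+1) : ℝ) = 2*(2*n+1) * (Nat.centralBinom n : ℝ) := by
    exact_mod_cast Nat.succ_mul_centralBinom_succ n
  have h4' : (4:ℝ)^n ≠ 0 := by positivity
  simp only [cc, pow_succ]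
  field_simp
  linear_combination -2 * key

lemma cb_le_pow (n : ℕ) : Nat.centralBinom n ≤ 4 ^ n := by
  have h := cb_sq n
  have h2 : Nat.centralBinom n ^ 2 ≤ (4^n)^2 := by
    calc Nat.centralBinom n ^ 2 ≤ (3*n+1) * Nat.centralBinom n ^ 2 := Nat.le_mul_of_pos_left _ (by positivity)
      _ ≤ 16^n := h
      _ = (4^n)^2 := by rw [← pow_mul, Nat.mul_comm, pow_mul]; norm_num
  exact (Nat.pow_le_pow_iff_left (by norm_num)).1 h2

lemma abs_cc_le_one (n : ℕ) : |cc n| ≤ 1 := by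
  have h := cb_le_pow n
  have h4 : (0:ℝ) < 4^n := by positivity
  rw [cc, abs_div, abs_mul, abs_pow, abs_neg, abs_one, one_pow, one_mul, abs_of_nonneg (by positivity : (0:ℝ) ≤ (Nat.centralBinom n : ℝ)), abs_of_pos h4, div_le_one h4]
  exact_mod_cast h

lemma cc_sqrt_bound (n : ℕ) : |cc n| * Real.sqrt (3*n+1) ≤ 1 := by
  have h := cb_sq n
  have hr : ((3*n+1 : ℕ):ℝ) * (Nat.centralBinom n : ℝ)^2 ≤ (16:ℝ)^n := by exact_mod_cast h
  have habs : |cc n| = (Nat.centralBinom n : ℝ) / 4^n := by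
    rw [cc, abs_div, abs_mul, abs_pow, abs_neg, abs_one, one_pow, one_mul,
      abs_of_nonneg (by positivity : (0:ℝ) ≤ (Nat.centralBinom n : ℝ)), abs_of_pos (by positivity : (0:ℝ) < (4:ℝ)^n)]
  rw [habs]
  have h4 : (0:ℝ) < 4^n := by positivity
  have key : (Nat.centralBinom n : ℝ) / 4^n * Real.sqrt (3*n+1)
      = Real.sqrt (((3*n+1:ℕ):ℝ) * (Nat.centralBinom n : ℝ)^2) / 4^n := by
    rw [Real.sqrt_mul (by positivity), Real.sqrt_sq (by positivity)]
    push_cast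
    ring
  rw [key, div_le_one h4]
  calc Real.sqrt (((3*n+1:ℕ):ℝ) * (Nat.centralBinom n : ℝ)^2) ≤ Real.sqrt ((16:ℝ)^n) :=
        Real.sqrt_le_sqrt hr
    _ = 4^n := by
        rw [show (16:ℝ)^n = (4^n)^2 by rw [← pow_mul, Nat.mul_comm, pow_mul]; norm_num]
        exact Real.sqrt_sq (by positivity)

lemma const_on_Ioo {r : ℝ} {F : ℝ → ℝ} (hF : ∀ y ∈ Ioo (-r) r, HasDerivAt F 0 y)
    {a : ℝ} (ha : a ∈ Ioo (-r) r) (h0 : (0:ℝ) ∈ Ioo (-r) r) : F a = F 0 := by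
  refine (convex_Ioo (-r) r).is_const_of_fderivWithin_eq_zero
    (fun y hy => ((hF y hy).differentiableAt).differentiableWithinAt) (fun y hy => ?_) ha h0
  rw [fderivWithin_of_isOpen isOpen_Ioo hy, (hF y hy).hasFDerivAt.fderiv]
  ext z
  simp

lemma hasSum_cc {t : ℝ} (ht : |t| < 1) :
    HasSum (fun n => cc n * t ^ n) ((Real.sqrt (1+t))⁻¹) := by
  set r : ℝ := (|t| + 1) / 2 with hrdef
  have hr0 : 0 < r := by positivity
  have hr1 : r < 1 := by rw [hrdef]; linarith
  have htr : |t| < r := by rw [hrdef]; linarith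
  have hmem : ∀ y ∈ Ioo (-r) r, |y| < r := fun y hy => abs_lt.2 ⟨hy.1, hy.2⟩
  have htmem : t ∈ Ioo (-r) r := by constructor <;> [linarith [neg_abs_le t]; linarith [le_abs_self t]]
  have h0mem : (0:ℝ) ∈ Ioo (-r) r := by constructor <;> [linarith; linarith]
  -- summability of the series on the interval
  have hsumy : ∀ y ∈ Ioo (-r) r, Summable (fun n => cc n * y ^ n) := by
    intro y hy
    refine Summable.of_norm_bounded (summable_geometric_of_lt_one hr0.le hr1) (fun n => ?_)
    rw [norm_mul, norm_pow, Real.norm_eq_abs, Real.norm_eq_abs]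
    calc |cc n| * |y| ^ n ≤ 1 * r ^ n := by
          apply mul_le_mul (abs_cc_le_one n) (pow_le_pow_left₀ (abs_nonneg y) (hmem y hy).le n)
            (by positivity) zero_le_one
      _ = r ^ n := one_mul _
  -- summable bound for the derivatives
  have hu : Summable (fun n : ℕ => (n:ℝ) * r ^ (n-1)) := by
    rw [← summable_nat_add_iff 1]
    have h1 : Summable (fun n : ℕ => ((n:ℝ)^1 * r ^ n)) :=
      summable_pow_mul_geometric_of_norm_lt_one 1 (by rwa [Real.norm_eq_abs, abs_of_pos hr0])
    have h2 : Summable (fun n : ℕ => r ^ n) := summable_geometric_of_lt_one hr0.le hr1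
    have := h1.add h2
    refine this.congr (fun n => ?_)
    simp [pow_one, Nat.add_sub_cancel]
    push_cast
    ring
  -- termwise derivatives
  have hder0 : ∀ (n : ℕ), ∀ y ∈ Ioo (-r) r, HasDerivAt (fun z => cc n * z ^ n)
      (cc n * ((n:ℝ) * y ^ (n-1))) y := fun n y _ => (hasDerivAt_pow n y).const_mul (cc n)
  have hbnd : ∀ (n : ℕ), ∀ y ∈ Ioo (-r) r, ‖cc n * ((n:ℝ) * y ^ (n-1))‖ ≤ (n:ℝ) * r ^ (n-1) := by
    intro n y hy
    rw [norm_mul, norm_mul, Real.norm_eq_abs, Real.norm_eq_abs, Real.norm_eq_abs, Nat.abs_cast,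
      abs_pow]
    calc |cc n| * ((n:ℝ) * |y| ^ (n-1)) ≤ 1 * ((n:ℝ) * r ^ (n-1)) := by
          apply mul_le_mul (abs_cc_le_one n) ?_ (by positivity) zero_le_one
          exact mul_le_mul_of_nonneg_left
            (pow_le_pow_left₀ (abs_nonneg y) (hmem y hy).le _) (Nat.cast_nonneg n)
      _ = (n:ℝ) * r ^ (n-1) := one_mul _
  set S : ℝ → ℝ := fun y => ∑' n, cc n * y ^ n with hSdef
  set D : ℝ → ℝ := fun y => ∑' n, cc n * ((n:ℝ) * y ^ (n-1)) with hDdef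
  have hderS : ∀ y ∈ Ioo (-r) r, HasDerivAt S (D y) y := by
    intro y hy
    exact hasDerivAt_tsum_of_isPreconnected hu isOpen_Ioo (convex_Ioo (-r) r).isPreconnected
      hder0 hbnd h0mem (hsumy 0 h0mem) hy
  -- key algebraic identity for the derivative
  have hkey : ∀ y ∈ Ioo (-r) r, 2 * (1+y) * D y + S y = 0 := by
    intro y hy
    have hA : Summable (fun n => cc n * ((n:ℝ) * y ^ (n-1))) :=
      Summable.of_norm_bounded hu (fun n => hbnd n y hy)
    have hS : Summable (fun n => cc n * y ^ n) := hsumy y hy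
    have hB : Summable (fun n : ℕ => (2*(n:ℝ)+1) * cc n * y ^ n) := by
      have hu' : Summable (fun n : ℕ => 3*((n:ℝ)+1) * r ^ n) := by
        have h1 : Summable (fun n : ℕ => ((n:ℝ)^1 * r ^ n)) :=
          summable_pow_mul_geometric_of_norm_lt_one 1 (by rwa [Real.norm_eq_abs, abs_of_pos hr0])
        have h2 : Summable (fun n : ℕ => r ^ n) := summable_geometric_of_lt_one hr0.le hr1
        refine ((h1.add h2).mul_left 3).congr (fun n => ?_)
        ring
      refine Summable.of_norm_bounded hu' (fun n => ?_)
      rw [norm_mul, norm_mul, Real.norm_eq_abs, Real.norm_eq_abs, Real.norm_eq_abs, abs_pow]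
      have e1 : |2*(n:ℝ)+1| ≤ 3*((n:ℝ)+1) := by
        rw [abs_of_nonneg (by positivity)]; push_cast; linarith
      calc |2*(n:ℝ)+1| * |cc n| * |y| ^ n ≤ (3*((n:ℝ)+1)) * 1 * r ^ n := by
            apply mul_le_mul _ (pow_le_pow_left₀ (abs_nonneg y) (hmem y hy).le n) (by positivity) (by positivity)
            exact mul_le_mul e1 (abs_cc_le_one n) (abs_nonneg _) (by positivity)
        _ = 3*((n:ℝ)+1) * r ^ n := by ring
    have h2D : 2 * D y = -∑' n : ℕ, (2*(n:ℝ)+1) * cc n * y ^ n := by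
      rw [hDdef, ← tsum_mul_left]
      rw [Summable.tsum_eq_zero_add (hA.mul_left 2)]
      simp only [Nat.cast_zero, zero_mul, mul_zero, zero_add, Nat.cast_ofNat]
      rw [← tsum_neg]
      congr 1
      funext n
      have hcc := cc_rec n
      have : (((n:ℕ)+1 : ℕ):ℝ) = (n:ℝ)+1 := by push_cast; ring
      simp only [Nat.add_sub_cancel, this]
      have : cc (n+1) * (((n:ℝ)+1) * y ^ n) = (((n:ℝ)+1) * cc (n+1)) * y ^ n := by ring
      rw [this, hcc]
      ring
    have hyD : 2 * y * D y + S y = ∑' n : ℕ, (2*(n:ℝ)+1) * cc n * y ^ n := by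
      rw [hDdef, hSdef, ← tsum_mul_left, ← Summable.tsum_add (hA.mul_left (2*y)) hS]
      congr 1
      funext n
      cases n with
      | zero => simp
      | succ m =>
        simp only [Nat.add_sub_cancel]
        push_cast
        rw [pow_succ]
        ring
    nlinarith [h2D, hyD]
  -- the function S y * sqrt(1+y) has zero derivative
  have hFconst : S t * Real.sqrt (1+t) = S 0 * Real.sqrt (1+0) := by
    apply const_on_Ioo (F := fun y => S y * Real.sqrt (1+y)) _ htmem h0mem
    intro y hy
    have hy1 : 0 < 1 + y := by have := hy.1; simp at this ⊢; nlinarith [hr1]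
    have hq : Real.sqrt (1+y) ≠ 0 := by positivity
    have hsq : HasDerivAt (fun z : ℝ => Real.sqrt (1+z)) (1/(2*Real.sqrt (1+y))) y := by
      have h1 : HasDerivAt (fun z : ℝ => 1+z) 1 y := by
        simpa using (hasDerivAt_id y).const_add 1
      simpa [Function.comp_def] using (Real.hasDerivAt_sqrt hy1.ne').comp y h1
    have := ((hderS y hy).mul hsq)
    refine this.congr_deriv ?_
    have hq2 : Real.sqrt (1+y) * Real.sqrt (1+y) = 1+y := Real.mul_self_sqrt hy1.le
    have hk : S y = -(2*(1+y)*D y) := by linarith [hkey y hy]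
    rw [hk]
    field_simp
    linear_combination (D y) * hq2
  have hS0 : S 0 = 1 := by
    show (∑' n : ℕ, cc n * (0:ℝ) ^ n) = 1
    rw [tsum_eq_single 0 (fun n hn => by simp [zero_pow hn])]
    simp [cc]
  have h1 : S t * Real.sqrt (1+t) = 1 := by
    rw [hFconst, hS0]; norm_num
  have hSt : S t = (Real.sqrt (1+t))⁻¹ := eq_inv_of_mul_eq_one_left h1
  rw [← hSt]
  exact (hsumy t htmem).hasSum

noncomputable def aa (n : ℕ) : ℝ := -cc (n+1) / (2*((n:ℝ)+1))

lemma aa_mul (n : ℕ) : aa n * (2*((n:ℝ)+1)) = -cc (n+1) := by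
  have : (2*((n:ℝ)+1)) ≠ 0 := by positivity
  rw [aa, div_mul_cancel₀ _ this]

lemma abs_aa_le (n : ℕ) : |aa n| ≤ ((n:ℝ)+1) ^ (-(3/2) : ℝ) := by
  have h1 : (0:ℝ) < Real.sqrt ((n:ℝ)+1) := Real.sqrt_pos.2 (by positivity)
  have h3 : |cc (n+1)| * Real.sqrt ((n:ℝ)+1) ≤ 1 := by
    refine le_trans (mul_le_mul_of_nonneg_left ?_ (abs_nonneg _)) (cc_sqrt_bound (n+1))
    apply Real.sqrt_le_sqrt; push_cast; linarith
  have h4 : |aa n| = |cc (n+1)| / (2*((n:ℝ)+1)) := by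
    rw [aa, abs_div, abs_neg, abs_of_pos (by positivity : (0:ℝ) < 2*((n:ℝ)+1))]
  have hpow : ((n:ℝ)+1) ^ ((3/2) : ℝ) = ((n:ℝ)+1) * Real.sqrt ((n:ℝ)+1) := by
    rw [show ((3:ℝ)/2) = 1 + 1/2 by norm_num, Real.rpow_add (by positivity), Real.rpow_one,
      Real.sqrt_eq_rpow]
  have h5 : ((n:ℝ)+1) ^ (-(3/2) : ℝ) = 1 / (((n:ℝ)+1) * Real.sqrt ((n:ℝ)+1)) := by
    rw [Real.rpow_neg (by positivity), hpow, one_div]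
  rw [h4, h5]
  rw [div_le_div_iff₀ (by positivity) (by positivity)]
  have hn0 : (0:ℝ) ≤ (n:ℝ) := Nat.cast_nonneg n
  calc |cc (n+1)| * (((n:ℝ)+1) * Real.sqrt ((n:ℝ)+1))
      = (|cc (n+1)| * Real.sqrt ((n:ℝ)+1)) * ((n:ℝ)+1) := by ring
    _ ≤ 1 * ((n:ℝ)+1) := mul_le_mul_of_nonneg_right h3 (by positivity)
    _ ≤ 1 * (2*((n:ℝ)+1)) := by nlinarith

lemma summable_abs_aa : Summable (fun n : ℕ => |aa n|) := by
  have h : Summable (fun n : ℕ => ((n:ℝ)+1) ^ (-(3/2) : ℝ)) := by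
    have := (Real.summable_nat_rpow (p := -(3/2))).2 (by norm_num)
    rw [← summable_nat_add_iff 1] at this
    refine this.congr (fun n => ?_)
    push_cast; ring_nf
  exact Summable.of_nonneg_of_le (fun n => abs_nonneg _) (fun n => abs_aa_le n) h

lemma interior_eq {x : ℝ} (hx : |x| < 1) :
    Real.log ((1 + Real.sqrt (1+x^2))/2) = ∑' n : ℕ, aa n * x ^ (2*(n+1)) := by
  set r : ℝ := (|x| + 1) / 2 with hrdef
  have hr0 : 0 < r := by positivity
  have hr1 : r < 1 := by rw [hrdef]; linarith
  have hxr : |x| < r := by rw [hrdef]; linarith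
  have hmem : ∀ y ∈ Ioo (-r) r, |y| < r := fun y hy => abs_lt.2 ⟨hy.1, hy.2⟩
  have hxmem : x ∈ Ioo (-r) r := by constructor <;> [linarith [neg_abs_le x]; linarith [le_abs_self x]]
  have h0mem : (0:ℝ) ∈ Ioo (-r) r := by constructor <;> [linarith; linarith]
  have hgeo : Summable (fun n : ℕ => r ^ n) := summable_geometric_of_lt_one hr0.le hr1
  -- derivative bound
  have hbnd : ∀ (n : ℕ), ∀ y ∈ Ioo (-r) r,
      ‖aa n * (((2*(n+1):ℕ):ℝ) * y ^ (2*(n+1)-1))‖ ≤ r ^ n := by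
    intro n y hy
    have e1 : |aa n * (((2*(n+1):ℕ):ℝ) * y ^ (2*(n+1)-1))|
        = |cc (n+1)| * |y| ^ (2*n+1) := by
      have : aa n * (((2*(n+1):ℕ):ℝ) * y ^ (2*(n+1)-1))
          = (aa n * (2*((n:ℝ)+1))) * y ^ (2*n+1) := by
        push_cast
        have : 2*(n+1)-1 = 2*n+1 := by omega
        rw [this]; ring
      rw [this, aa_mul, abs_mul, abs_neg, abs_pow]
    rw [Real.norm_eq_abs, e1]
    calc |cc (n+1)| * |y| ^ (2*n+1) ≤ 1 * r ^ (2*n+1) := by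
          apply mul_le_mul (abs_cc_le_one _)
            (pow_le_pow_left₀ (abs_nonneg y) (hmem y hy).le _) (by positivity) zero_le_one
      _ = r ^ (2*n+1) := one_mul _
      _ ≤ r ^ n := pow_le_pow_of_le_one hr0.le hr1.le (by omega)
  -- the sum function and termwise derivative sums
  set G : ℝ → ℝ := fun y => ∑' n : ℕ, aa n * y ^ (2*(n+1)) with hGdef
  set DG : ℝ → ℝ := fun y => ∑' n : ℕ, aa n * (((2*(n+1):ℕ):ℝ) * y ^ (2*(n+1)-1)) with hDGdef
  have hG0sum : Summable (fun n : ℕ => aa n * (0:ℝ) ^ (2*(n+1))) := by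
    refine summable_of_ne_finset_zero (s := ∅) (fun n _ => ?_)
    simp [zero_pow (by omega : 2*(n+1) ≠ 0)]
  have hderG : ∀ y ∈ Ioo (-r) r, HasDerivAt G (DG y) y := by
    intro y hy
    exact hasDerivAt_tsum_of_isPreconnected hgeo isOpen_Ioo (convex_Ioo (-r) r).isPreconnected
      (fun n y _ => (hasDerivAt_pow (2*(n+1)) y).const_mul (aa n)) hbnd h0mem hG0sum hy
  -- identify DG with the explicit derivative
  have hDG : ∀ y ∈ Ioo (-r) r,
      DG y = y / (Real.sqrt (1+y^2) * (1 + Real.sqrt (1+y^2))) := by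
    intro y hy
    have hy2 : |y^2| < 1 := by
      rw [abs_pow]
      exact pow_lt_one₀ (abs_nonneg y) (lt_trans (hmem y hy) hr1) (by norm_num)
    have hq0 : (0:ℝ) < 1 + y^2 := by positivity
    have hq : (0:ℝ) < Real.sqrt (1+y^2) := Real.sqrt_pos.2 hq0
    have hq2 : Real.sqrt (1+y^2) * Real.sqrt (1+y^2) = 1+y^2 := Real.mul_self_sqrt hq0.le
    have hs := hasSum_cc hy2
    -- DG y termwise equals -cc(n+1) * y^(2n+1)
    have hterm : ∀ n : ℕ, aa n * (((2*(n+1):ℕ):ℝ) * y ^ (2*(n+1)-1)) = -(cc (n+1) * y ^ (2*n+1)) := by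
      intro n
      have h1 : 2*(n+1)-1 = 2*n+1 := by omega
      have : aa n * (((2*(n+1):ℕ):ℝ) * y ^ (2*(n+1)-1))
          = (aa n * (2*((n:ℝ)+1))) * y ^ (2*n+1) := by
        push_cast; rw [h1]; ring
      rw [this, aa_mul]; ring
    have hDsum : Summable (fun n : ℕ => aa n * (((2*(n+1):ℕ):ℝ) * y ^ (2*(n+1)-1))) :=
      Summable.of_norm_bounded hgeo (fun n => hbnd n y hy)
    rcases eq_or_ne y 0 with hy0 | hy0
    · subst hy0
      have hz : ∀ n : ℕ, aa n * (((2*(n+1):ℕ):ℝ) * (0:ℝ) ^ (2*(n+1)-1)) = 0 := by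
        intro n
        simp [zero_pow (show 2*(n+1)-1 ≠ 0 by omega)]
      have hDG0 : DG 0 = 0 := by
        rw [hDGdef]
        show (∑' n : ℕ, aa n * (((2*(n+1):ℕ):ℝ) * (0:ℝ) ^ (2*(n+1)-1))) = 0
        rw [tsum_congr hz, tsum_zero]
      rw [hDG0]
      simp
    · -- y ≠ 0
      have htsum1 : (Real.sqrt (1+y^2))⁻¹ = cc 0 * (y^2)^0 + ∑' n : ℕ, cc (n+1) * (y^2)^(n+1) := by
        rw [← hs.tsum_eq]
        exact Summable.tsum_eq_zero_add hs.summable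
      have hcc0 : cc 0 * ((y:ℝ)^2)^0 = 1 := by simp [cc]
      have hshift : ∑' n : ℕ, cc (n+1) * (y^2)^(n+1) = (Real.sqrt (1+y^2))⁻¹ - 1 := by
        rw [htsum1, hcc0]; ring
      have hyDG : y * DG y = 1 - (Real.sqrt (1+y^2))⁻¹ := by
        rw [hDGdef, ← tsum_mul_left]
        have : ∀ n : ℕ, y * (aa n * (((2*(n+1):ℕ):ℝ) * y ^ (2*(n+1)-1)))
            = -(cc (n+1) * (y^2)^(n+1)) := by
          intro n
          rw [hterm n, ← pow_mul]
          ring_nf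
        rw [tsum_congr this, tsum_neg, hshift]
        ring
      have hfd : y * (y / (Real.sqrt (1+y^2) * (1 + Real.sqrt (1+y^2))))
          = 1 - (Real.sqrt (1+y^2))⁻¹ := by
        have hne1 : Real.sqrt (1+y^2) ≠ 0 := hq.ne'
        have hne2 : 1 + Real.sqrt (1+y^2) ≠ 0 := by positivity
        field_simp
        linear_combination (-1 : ℝ) * hq2
      exact mul_left_cancel₀ hy0 (by rw [hyDG, hfd])
  -- derivative of the log function
  have hderf : ∀ y : ℝ, HasDerivAt (fun z => Real.log ((1 + Real.sqrt (1+z^2))/2))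
      (y / (Real.sqrt (1+y^2) * (1 + Real.sqrt (1+y^2)))) y := by
    intro y
    have hq0 : (0:ℝ) < 1 + y^2 := by positivity
    have hq : (0:ℝ) < Real.sqrt (1+y^2) := Real.sqrt_pos.2 hq0
    have h1 : HasDerivAt (fun z : ℝ => 1+z^2) (2*y) y := by
      simpa using ((hasDerivAt_pow 2 y).const_add 1)
    have h2 : HasDerivAt (fun z : ℝ => Real.sqrt (1+z^2)) (y / Real.sqrt (1+y^2)) y := by
      have hne : Real.sqrt (1+y^2) ≠ 0 := hq.ne'
      have := (Real.hasDerivAt_sqrt hq0.ne').comp y h1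
      refine this.congr_deriv ?_
      field_simp
    have h3 : HasDerivAt (fun z : ℝ => (1 + Real.sqrt (1+z^2))/2)
        ((y / Real.sqrt (1+y^2))/2) y := (h2.const_add 1).div_const 2
    have h4 : (1 + Real.sqrt (1+y^2))/2 ≠ 0 := by positivity
    have := h3.log h4
    convert this using 1
    have hne1 : Real.sqrt (1+y^2) ≠ 0 := hq.ne'
    have hne2 : 1 + Real.sqrt (1+y^2) ≠ 0 := by positivity
    field_simp
  -- f - G has zero derivative on the interval
  have hconst : Real.log ((1 + Real.sqrt (1+x^2))/2) - G x
      = Real.log ((1 + Real.sqrt (1+(0:ℝ)^2))/2) - G 0 := by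
    apply const_on_Ioo (F := fun y => Real.log ((1 + Real.sqrt (1+y^2))/2) - G y) _ hxmem h0mem
    intro y hy
    have := (hderf y).sub ((hderG y hy).congr_deriv (hDG y hy))
    exact this.congr_deriv (sub_self _)
  have hG0 : G 0 = 0 := by
    rw [hGdef]
    show (∑' n : ℕ, aa n * (0:ℝ) ^ (2*(n+1))) = 0
    have hz : ∀ n : ℕ, aa n * (0:ℝ) ^ (2*(n+1)) = 0 := fun n => by
      simp [zero_pow (by omega : 2*(n+1) ≠ 0)]
    rw [tsum_congr hz, tsum_zero]
  have hf0 : Real.log ((1 + Real.sqrt (1+(0:ℝ)^2))/2) = 0 := by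
    norm_num
  rw [hG0, hf0] at hconst
  linarith [hconst]

lemma term_eq (n : ℕ) (x : ℝ) :
    (-1 : ℝ) ^ ((n + 1) + 1) * ((2 * (n + 1)).factorial : ℝ) * x ^ (2 * (n + 1)) /
      (4 ^ (n + 1) * ((n + 1).factorial : ℝ) ^ 2 * (2 * ((n : ℝ) + 1)))
    = aa n * x ^ (2*(n+1)) := by
  have hfact : ((2*(n+1)).factorial : ℝ)
      = (Nat.centralBinom (n+1) : ℝ) * ((n+1).factorial : ℝ)^2 := by
    have h := Nat.choose_mul_factorial_mul_factorial (show n+1 ≤ 2*(n+1) by omega)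
    have h2 : 2*(n+1) - (n+1) = n+1 := by omega
    rw [h2] at h
    have : Nat.centralBinom (n+1) = (2*(n+1)).choose (n+1) := rfl
    rw [this]
    exact_mod_cast (by rw [← h]; ring_nf : (2*(n+1)).factorial
      = (2*(n+1)).choose (n+1) * ((n+1).factorial)^2)
  rw [hfact]
  simp only [aa, cc]
  have hne1 : ((n+1).factorial : ℝ) ≠ 0 := Nat.cast_ne_zero.2 (Nat.factorial_ne_zero _)
  have hne2 : (4:ℝ)^(n+1) ≠ 0 := by positivity
  have hne3 : (2*((n:ℝ)+1)) ≠ 0 := by positivity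
  field_simp
  ring

/-- For every real `X` with `|X| ≤ 1`,
`log((1 + √(1 + X²))/2) = ∑_{ℓ=1}^{∞} (−1)^{ℓ+1}·(2ℓ)!·X^{2ℓ} / (4^{ℓ}·(ℓ!)²·2ℓ)`,
the series converging absolutely.  (The sum over `ℓ ≥ 1` is written below via the
reindexing `ℓ = n + 1`.) -/
theorem log_one_add_sqrt_series (X : ℝ) (hX : |X| ≤ 1) :
    Summable (fun n : ℕ =>
        |(-1 : ℝ) ^ ((n + 1) + 1) * ((2 * (n + 1)).factorial : ℝ) * X ^ (2 * (n + 1)) /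
          (4 ^ (n + 1) * ((n + 1).factorial : ℝ) ^ 2 * (2 * ((n : ℝ) + 1)))|) ∧
    HasSum (fun n : ℕ =>
        (-1 : ℝ) ^ ((n + 1) + 1) * ((2 * (n + 1)).factorial : ℝ) * X ^ (2 * (n + 1)) /
          (4 ^ (n + 1) * ((n + 1).factorial : ℝ) ^ 2 * (2 * ((n : ℝ) + 1))))
      (Real.log ((1 + Real.sqrt (1 + X ^ 2)) / 2)) := by
  have habs : ∀ (x : ℝ), |x| ≤ 1 → ∀ n : ℕ, |aa n * x ^ (2*(n+1))| ≤ |aa n| := by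
    intro x hx n
    rw [abs_mul, abs_pow]
    calc |aa n| * |x| ^ (2*(n+1)) ≤ |aa n| * 1 := by
          apply mul_le_mul_of_nonneg_left _ (abs_nonneg _)
          exact pow_le_one₀ (abs_nonneg x) hx
      _ = |aa n| := mul_one _
  have hsummable : ∀ (x : ℝ), |x| ≤ 1 → Summable (fun n : ℕ => aa n * x ^ (2*(n+1))) := by
    intro x hx
    refine Summable.of_abs (Summable.of_nonneg_of_le (fun n => abs_nonneg _)
      (habs x hx) summable_abs_aa)
  -- clamped sum function, continuous everywhere
  set p : ℝ → ℝ := fun z => max (-1) (min 1 z) with hpdef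
  have hpcont : Continuous p := continuous_const.max (continuous_const.min continuous_id)
  have hpabs : ∀ z, |p z| ≤ 1 := by
    intro z
    rw [abs_le]
    constructor
    · exact le_max_left _ _
    · exact max_le (by norm_num) (min_le_left _ _)
  have hpid : ∀ z ∈ Icc (-1:ℝ) 1, p z = z := by
    intro z hz
    rw [hpdef]
    simp only
    rw [min_eq_right hz.2, max_eq_right hz.1]
  set Gc : ℝ → ℝ := fun z => ∑' n : ℕ, aa n * (p z) ^ (2*(n+1)) with hGcdef
  have hGccont : Continuous Gc := by
    refine continuous_tsum (fun n => ?_) summable_abs_aa (fun n z => ?_)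
    · exact (continuous_const.mul ((hpcont.pow _)))
    · rw [Real.norm_eq_abs]
      exact habs (p z) (hpabs z) n
  set f : ℝ → ℝ := fun z => Real.log ((1 + Real.sqrt (1+z^2))/2) with hfdef
  have hfcont : Continuous f := by
    apply Continuous.log
    · exact ((continuous_const.add ((continuous_const.add (continuous_pow 2)).sqrt)).div_const 2)
    · intro z
      have : (0:ℝ) < Real.sqrt (1+z^2) := Real.sqrt_pos.2 (by positivity)
      positivity
  have heq : EqOn f Gc (Icc (-1:ℝ) 1) := by
    have h1 : EqOn f Gc (Ioo (-1:ℝ) 1) := by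
      intro z hz
      have hz1 : |z| < 1 := abs_lt.2 ⟨hz.1, hz.2⟩
      rw [hfdef, hGcdef]
      simp only
      rw [hpid z (Ioo_subset_Icc_self hz)]
      exact interior_eq hz1
    have := h1.closure hfcont hGccont
    rwa [closure_Ioo (by norm_num : (-1:ℝ) ≠ 1)] at this
  have hXmem : X ∈ Icc (-1:ℝ) 1 := abs_le.1 hX
  have hfX : f X = ∑' n : ℕ, aa n * X ^ (2*(n+1)) := by
    have := heq hXmem
    rw [hGcdef] at this
    simp only at this
    rw [hpid X hXmem] at this
    exact this
  constructor
  · refine Summable.congr (Summable.of_nonneg_of_le (fun n => abs_nonneg _)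
      (habs X hX) summable_abs_aa) (fun n => ?_)
    rw [← term_eq n X]
  · have hs := (hsummable X hX).hasSum
    rw [← hfX] at hs
    simp only [term_eq]
    exact hs
end

section
/- Let λ be a real number. Then |1 + (λ/2)(e^{2iπκ} − 4e^{iπκ} + 3)| ≤ 1 holds for all κ ∈ [−1,1] if and only if λ = 0. In other words, the second-order forward (one-sided) finite-difference scheme combined with the explicit Euler time integrator is unconditionally von Neumann unstable for the advection equation. -/
set_option maxHeartbeats 1600000 in
/-- For a real stability number `λ`, the amplification factor
`G(κ) = 1 + (λ/2)(e^{2iπκ} − 4e^{iπκ} + 3)` of the second-order forward scheme with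
explicit Euler time integration satisfies `|G(κ)| ≤ 1` for all `κ ∈ [−1,1]` if and only if
`λ = 0`: the scheme is unconditionally von Neumann unstable. -/
theorem euler_forward2_unstable (l : ℝ) :
    (∀ κ ∈ Set.Icc (-1 : ℝ) 1,
        ‖1 + (l / 2 : ℝ) * (Complex.exp (2 * Complex.I * Real.pi * κ)
          - 4 * Complex.exp (Complex.I * Real.pi * κ) + 3)‖ ≤ 1)
      ↔ l = 0 := by
  constructor
  · intro h
    by_contra hl
    have hl0 : 0 < |l| := abs_pos.mpr hl
    set θ : ℝ := min 1 (Real.sqrt |l| / 2) with hθdef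
    have hθpos : 0 < θ := lt_min one_pos (by positivity)
    have hθ1 : θ ≤ 1 := min_le_left _ _
    have hθsq : θ ^ 2 ≤ |l| / 4 := by
      have h2 : θ ≤ Real.sqrt |l| / 2 := min_le_right _ _
      have h3 : θ ^ 2 ≤ (Real.sqrt |l| / 2) ^ 2 := by nlinarith
      have h4 : (Real.sqrt |l| / 2) ^ 2 = |l| / 4 := by
        rw [div_pow, Real.sq_sqrt (abs_nonneg l)]; norm_num
      linarith [h3, h4.le]
    have hπ : (0 : ℝ) < Real.pi := Real.pi_pos
    set κ : ℝ := θ / Real.pi with hκdef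
    have hκmem : κ ∈ Set.Icc (-1 : ℝ) 1 := by
      constructor
      · have : 0 ≤ κ := by positivity
        linarith
      · rw [hκdef, div_le_one hπ]
        linarith [Real.pi_gt_three]
    have hπκ : Real.pi * κ = θ := by
      rw [hκdef]; field_simp [hπ.ne']
    have key := h κ hκmem
    -- rewrite the complex expression
    have e1 : Complex.exp (Complex.I * Real.pi * κ)
        = Real.cos θ + Real.sin θ * Complex.I := by
      have : (Complex.I * Real.pi * κ : ℂ) = (θ : ℂ) * Complex.I := by
        push_cast [← hπκ]; ring
      rw [this, Complex.exp_mul_I, Complex.ofReal_cos, Complex.ofReal_sin]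
    have e2 : Complex.exp (2 * Complex.I * Real.pi * κ)
        = Real.cos (2 * θ) + Real.sin (2 * θ) * Complex.I := by
      have : (2 * Complex.I * Real.pi * κ : ℂ) = ((2 * θ : ℝ) : ℂ) * Complex.I := by
        push_cast [← hπκ]; ring
      rw [this, Complex.exp_mul_I, Complex.ofReal_cos, Complex.ofReal_sin]
    set a : ℝ := Real.cos θ with ha
    set s : ℝ := Real.sin θ with hs
    have ha2 : Real.cos (2 * θ) = 2 * a ^ 2 - 1 := by
      rw [Real.cos_two_mul]
    have hs2 : Real.sin (2 * θ) = 2 * s * a := by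
      rw [Real.sin_two_mul]
    have hG : (1 + ((l / 2 : ℝ) : ℂ) * (Complex.exp (2 * Complex.I * Real.pi * κ)
          - 4 * Complex.exp (Complex.I * Real.pi * κ) + 3))
        = ((1 + l / 2 * (2 * a ^ 2 - 1 - 4 * a + 3) : ℝ) : ℂ)
          + ((l / 2 * (2 * s * a - 4 * s) : ℝ) : ℂ) * Complex.I := by
      rw [e1, e2, ha2, hs2]
      push_cast
      ring
    rw [hG, Complex.norm_def, Complex.normSq_add_mul_I] at key
    have hsq : (1 + l / 2 * (2 * a ^ 2 - 1 - 4 * a + 3)) ^ 2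
        + (l / 2 * (2 * s * a - 4 * s)) ^ 2 ≤ 1 := by
      have hnn : (0:ℝ) ≤ (1 + l / 2 * (2 * a ^ 2 - 1 - 4 * a + 3)) ^ 2
          + (l / 2 * (2 * s * a - 4 * s)) ^ 2 := by positivity
      nlinarith [Real.sqrt_nonneg ((1 + l / 2 * (2 * a ^ 2 - 1 - 4 * a + 3)) ^ 2
          + (l / 2 * (2 * s * a - 4 * s)) ^ 2),
        Real.sq_sqrt hnn]
    have hid : (1 + l / 2 * (2 * a ^ 2 - 1 - 4 * a + 3)) ^ 2
        + (l / 2 * (2 * s * a - 4 * s)) ^ 2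
        = 1 + l * (2 * (a - 1) ^ 2)
          + l ^ 2 / 4 * ((2 * (a - 1) ^ 2) ^ 2 + (2 * s * (a - 2)) ^ 2) := by
      ring
    rw [hid] at hsq
    have hmain : l * (2 * (a - 1) ^ 2)
        + l ^ 2 / 4 * ((2 * (a - 1) ^ 2) ^ 2 + (2 * s * (a - 2)) ^ 2) ≤ 0 := by
      linarith
    -- trig bounds
    have hcos_le : a ≤ 1 := Real.cos_le_one θ
    have hcos_ge : 1 - θ ^ 2 / 2 ≤ a := Real.one_sub_sq_div_two_le_cos
    have hsin : θ - θ ^ 3 / 4 < s := by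
      have := Real.sin_gt_sub_cube hθpos; linarith [pow_pos hθpos 3]
    have hsin34 : 3 * θ / 4 ≤ s := by nlinarith
    have hspos : 0 < s := by linarith [hθpos]
    have h23 : (0:ℝ) ≤ (1 - a) * (3 - a) :=
      mul_nonneg (by linarith) (by linarith)
    have hIi : 4 * s ^ 2 ≤ (2 * s * (a - 2)) ^ 2 := by
      nlinarith [mul_nonneg (sq_nonneg s) h23]
    have hs2b : l ^ 2 * (9 * θ ^ 2 / 16) ≤ l ^ 2 * s ^ 2 := by
      have : 9 * θ ^ 2 / 16 ≤ s ^ 2 := by nlinarith [hsin34, hθpos.le]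
      nlinarith [sq_nonneg l]
    have hIsq : l ^ 2 * s ^ 2 ≤ l ^ 2 / 4 * ((2 * (a - 1) ^ 2) ^ 2 + (2 * s * (a - 2)) ^ 2) := by
      nlinarith [sq_nonneg (l * (a - 1) ^ 2), sq_nonneg l, hIi]
    rcases lt_or_gt_of_ne hl with hneg | hpos
    · -- l < 0
      have habs : |l| = -l := abs_of_neg hneg
      have h0a : (0:ℝ) ≤ 1 - a := by linarith
      have h1a : 1 - a ≤ θ ^ 2 / 2 := by linarith
      have hR : 2 * (a - 1) ^ 2 ≤ θ ^ 4 / 2 := by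
        nlinarith [mul_le_mul h1a h1a h0a (by positivity : (0:ℝ) ≤ θ ^ 2 / 2)]
      have hlR : l * (θ ^ 4 / 2) ≤ l * (2 * (a - 1) ^ 2) :=
        mul_le_mul_of_nonpos_left hR hneg.le
      have hθ4 : θ ^ 4 / 2 ≤ (-l) * θ ^ 2 / 8 := by
        have hθl : θ ^ 2 ≤ -l / 4 := by rw [habs] at hθsq; linarith
        nlinarith [sq_nonneg θ]
      have hpos2 : 0 < l ^ 2 * θ ^ 2 := by positivity
      nlinarith [hmain, hlR, hθ4, hs2b, hIsq]
    · -- l > 0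
      have h1 : 0 ≤ l * (2 * (a - 1) ^ 2) := by positivity
      have h2 : 0 < l ^ 2 * s ^ 2 := by positivity
      linarith [hmain, hIsq]
  · intro hl
    intro κ _
    simp [hl]
end

section
/- Let λ be a real number. Then |1 + (λ/6)(e^{−2iπκ} − 4e^{iπκ} + 3)| ≤ 1 holds for all κ ∈ [−1,1] if and only if λ = 0. In other words, the second-order forward-first zigzag finite-difference scheme combined with the explicit Euler time integrator is unconditionally von Neumann unstable for the advection equation. -/
set_option maxHeartbeats 1000000

lemma exp_mul_I_eq (x : ℝ) :
    Complex.exp ((x : ℂ) * Complex.I) = (Real.cos x : ℂ) + (Real.sin x : ℂ) * Complex.I := by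
  rw [Complex.exp_mul_I, Complex.ofReal_cos, Complex.ofReal_sin]

lemma abs_sq_G (a κ : ℝ) :
    ‖(1 + (a : ℝ) * (Complex.exp (-2 * Complex.I * Real.pi * κ)
          - 4 * Complex.exp (Complex.I * Real.pi * κ) + 3) : ℂ)‖ ^ 2
    = (1 + a * (Real.cos (2*(Real.pi*κ)) - 4 * Real.cos (Real.pi*κ) + 3)) ^ 2
      + (a * (Real.sin (2*(Real.pi*κ)) + 4 * Real.sin (Real.pi*κ))) ^ 2 := by
  have e1 : Complex.exp (-2 * Complex.I * Real.pi * κ)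
      = (Real.cos (2*(Real.pi*κ)) : ℂ) - (Real.sin (2*(Real.pi*κ)) : ℂ) * Complex.I := by
    have h : (-2 * Complex.I * Real.pi * κ) = ((-(2*(Real.pi*κ)) : ℝ) : ℂ) * Complex.I := by
      push_cast; ring
    rw [h, exp_mul_I_eq, Real.cos_neg, Real.sin_neg]
    push_cast; ring
  have e2 : Complex.exp (Complex.I * Real.pi * κ)
      = (Real.cos (Real.pi*κ) : ℂ) + (Real.sin (Real.pi*κ) : ℂ) * Complex.I := by
    have h : (Complex.I * Real.pi * κ) = (((Real.pi*κ) : ℝ) : ℂ) * Complex.I := by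
      push_cast; ring
    rw [h, exp_mul_I_eq]
  rw [e1, e2, Complex.sq_norm, Complex.normSq_apply]
  simp only [Complex.add_re, Complex.add_im, Complex.mul_re, Complex.mul_im, Complex.sub_re,
    Complex.sub_im, Complex.I_re, Complex.I_im, Complex.ofReal_re, Complex.ofReal_im,
    Complex.one_re, Complex.one_im, Complex.re_ofNat, Complex.im_ofNat]
  ring

lemma real_key (b θ : ℝ) (hb0 : 0 < b) (hθ0 : 0 < θ) (hθle : θ ≤ Real.pi / 4)
    (hθsq : θ^2 < 5*b) :
    (1 + (-b) * (Real.cos (2*θ) - 4 * Real.cos θ + 3)) ^ 2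
      + ((-b) * (Real.sin (2*θ) + 4 * Real.sin θ)) ^ 2 > 1 := by
  have hπ1 : (3.141592 : ℝ) < Real.pi := Real.pi_gt_d6
  have hπ2 : Real.pi < 3.1416 := Real.pi_lt_d4
  have hcos : 1 - θ^2/2 ≤ Real.cos θ := Real.one_sub_sq_div_two_le_cos
  have hcos1 : Real.cos θ ≤ 1 := Real.cos_le_one θ
  have hsin : 2 / Real.pi * θ ≤ Real.sin θ := by
    apply Real.mul_le_sin hθ0.le
    linarith
  have hsin2 : 0 ≤ Real.sin (2*θ) := by
    apply Real.sin_nonneg_of_nonneg_of_le_pi <;> linarith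
  have hc2 : Real.cos (2*θ) = 2 * Real.cos θ ^2 - 1 := Real.cos_two_mul θ
  have hsinθ : Real.sin θ ≥ (3/5 : ℝ) * θ := by
    have h2π : (3/5 : ℝ) ≤ 2 / Real.pi := by
      rw [le_div_iff₀ Real.pi_pos]; nlinarith
    nlinarith
  have hR : Real.cos (2*θ) - 4 * Real.cos θ + 3 = 2 * (1 - Real.cos θ)^2 := by
    rw [hc2]; ring
  set R : ℝ := 2 * (1 - Real.cos θ)^2 with hRdef
  set I : ℝ := Real.sin (2*θ) + 4 * Real.sin θ with hIdef
  rw [hR]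
  have hR0 : 0 ≤ R := by positivity
  have hRle : 2 * R ≤ θ^4 := by
    have hu : 1 - Real.cos θ ≤ θ^2/2 := by linarith
    have h0 : 0 ≤ 1 - Real.cos θ := by linarith
    nlinarith
  have hI : I ≥ 12/5 * θ := by
    rw [hIdef]; nlinarith
  have hI2 : I^2 ≥ 144/25 * θ^2 := by nlinarith
  clear_value R I
  have h1 : b * θ^4 < 5 * b^2 * θ^2 := by nlinarith [mul_pos hb0 (mul_pos hθ0 hθ0)]
  have h2 : b^2 * I^2 ≥ 144/25 * (b^2 * θ^2) := by nlinarith [sq_nonneg b]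
  have h3 : 2 * (b * R) ≤ b * θ^4 := by nlinarith
  nlinarith [sq_nonneg (b * R), mul_pos (mul_pos hb0 hb0) (mul_pos hθ0 hθ0)]

/-- For a real stability number `λ`, the amplification factor
`G(κ) = 1 + (λ/6)(e^{−2iπκ} − 4e^{iπκ} + 3)` of the second-order forward-first zigzag
scheme with explicit Euler time integration satisfies `|G(κ)| ≤ 1` for all `κ ∈ [−1,1]` if
and only if `λ = 0`: the scheme is unconditionally von Neumann unstable. -/
theorem euler_zigzag2_unstable (l : ℝ) :
    (∀ κ ∈ Set.Icc (-1 : ℝ) 1,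
        ‖(1 + (l / 6 : ℝ) * (Complex.exp (-2 * Complex.I * Real.pi * κ)
          - 4 * Complex.exp (Complex.I * Real.pi * κ) + 3) : ℂ)‖ ≤ 1)
      ↔ l = 0 := by
  constructor
  · intro H
    by_contra hl
    have hπ1 : (3.141592 : ℝ) < Real.pi := Real.pi_gt_d6
    have hπ2 : Real.pi < 3.1416 := Real.pi_lt_d4
    have hπsq : Real.pi^2 < 9.87 := by nlinarith
    rcases lt_or_gt_of_ne hl with hneg | hpos
    · -- l < 0 : choose a small κ
      set b : ℝ := -l/6 with hb
      have hb0 : 0 < b := by rw [hb]; linarith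
      set κ : ℝ := min (Real.sqrt b / 2) (1/4) with hκ
      have hκ0 : 0 < κ := by
        apply lt_min
        · positivity
        · norm_num
      have hκ4 : κ ≤ 1/4 := min_le_right _ _
      have hθsq : (Real.pi * κ)^2 < 5 * b := by
        rcases min_cases (Real.sqrt b / 2) (1/4 : ℝ) with ⟨h1, h2⟩ | ⟨h1, h2⟩
        · have hκe : κ = Real.sqrt b / 2 := by rw [hκ, h1]
          have hs : Real.sqrt b ^ 2 = b := Real.sq_sqrt hb0.le
          have he : (Real.pi * (Real.sqrt b / 2))^2 = Real.pi^2 * Real.sqrt b ^ 2 / 4 := by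
            ring
          rw [hκe, he, hs]
          have := mul_lt_mul_of_pos_right hπsq hb0
          linarith
        · have hbq : (1/4 : ℝ) < Real.sqrt b / 2 := h2
          have hsb : (1/2 : ℝ) ≤ Real.sqrt b := by linarith
          have hb14 : (1/4 : ℝ) ≤ b := by nlinarith [Real.sq_sqrt hb0.le]
          have hκe : κ = 1/4 := by rw [hκ, h1]
          rw [hκe]
          nlinarith
      have hmem : κ ∈ Set.Icc (-1 : ℝ) 1 := ⟨by linarith, by linarith⟩
      have hH := H κ hmem
      have habs2 : (1 + (l/6) * (Real.cos (2*(Real.pi*κ)) - 4 * Real.cos (Real.pi*κ) + 3)) ^ 2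
          + ((l/6) * (Real.sin (2*(Real.pi*κ)) + 4 * Real.sin (Real.pi*κ))) ^ 2 ≤ 1 := by
        rw [← abs_sq_G (l/6) κ]
        exact pow_le_one₀ (norm_nonneg _) hH
      have hkey := real_key b (Real.pi * κ) hb0 (by positivity)
        (by nlinarith) hθsq
      have hlb : l / 6 = -b := by rw [hb]; ring
      rw [hlb] at habs2
      linarith
    · -- l > 0 : κ = 1
      have hH := H 1 ⟨by norm_num, le_refl 1⟩
      have habs2 : (1 + (l/6) * (Real.cos (2*(Real.pi*1)) - 4 * Real.cos (Real.pi*1) + 3)) ^ 2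
          + ((l/6) * (Real.sin (2*(Real.pi*1)) + 4 * Real.sin (Real.pi*1))) ^ 2 ≤ 1 := by
        rw [← abs_sq_G (l/6) 1]
        exact pow_le_one₀ (norm_nonneg _) hH
      have hc2 : Real.cos (2*(Real.pi*1)) = 1 := by
        rw [show (2*(Real.pi*1)) = 2*Real.pi by ring, Real.cos_two_pi]
      have hcπ : Real.cos (Real.pi*1) = -1 := by rw [mul_one, Real.cos_pi]
      have hs2 : Real.sin (2*(Real.pi*1)) = 0 := by
        rw [show (2*(Real.pi*1)) = 2*Real.pi by ring, Real.sin_two_pi]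
      have hsπ : Real.sin (Real.pi*1) = 0 := by rw [mul_one, Real.sin_pi]
      rw [hc2, hcπ, hs2, hsπ] at habs2
      nlinarith
  · rintro rfl
    intro κ _
    simp
end

section
/- Let λ be a real number and set B(κ) = −λ(e^{iπκ} − 1). Then |1 + B(κ) + B(κ)²/2| ≤ 1 holds for all κ ∈ [−1,1] if and only if −1 ≤ λ ≤ 0. In other words, the first-order forward (one-sided) finite-difference scheme combined with the second-order Runge–Kutta time integrator is von Neumann stable for the advection equation exactly when the stability number λ lies in [−1,0]. -/
/-- `Λ(κ) = −λ(e^{iπκ} − 1)`, the amplification increment of the first-order forward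
scheme at scaled wavenumber `κ` and stability number `λ`. -/
noncomputable def forward1Lambda (l κ : ℝ) : ℂ :=
  -(l : ℂ) * (Complex.exp (Complex.I * Real.pi * κ) - 1)

/-- With `B(κ) = −λ(e^{iπκ} − 1)`, the RK2 amplification factor
`G(κ) = 1 + B(κ) + B(κ)²/2` satisfies `|G(κ)| ≤ 1` for all `κ ∈ [−1,1]` if and only if
`−1 ≤ λ ≤ 0`: the first-order forward scheme with the second-order Runge–Kutta time
integrator is von Neumann stable exactly when `λ ∈ [−1,0]`. -/
theorem rk2_forward1_stability (l : ℝ) :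
    (∀ κ ∈ Set.Icc (-1 : ℝ) 1,
        ‖1 + forward1Lambda l κ + forward1Lambda l κ ^ 2 / 2‖ ≤ 1)
      ↔ (-1 ≤ l ∧ l ≤ 0) := by
  constructor
  · intro h
    have h1 := h 1 (by constructor <;> norm_num)
    have hexp : Complex.exp (Complex.I * Real.pi * (1 : ℝ)) = -1 := by
      rw [show Complex.I * (Real.pi : ℂ) * ((1:ℝ) : ℂ) = Real.pi * Complex.I by
        push_cast; ring]
      exact Complex.exp_pi_mul_I
    have hval : (1 : ℂ) + forward1Lambda l 1 + forward1Lambda l 1 ^ 2 / 2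
        = ((1 + 2*l + 2*l^2 : ℝ) : ℂ) := by
      rw [forward1Lambda, hexp]; push_cast; ring
    rw [hval, Complex.norm_real, Real.norm_eq_abs] at h1
    have hle : 1 + 2*l + 2*l^2 ≤ 1 := le_trans (le_abs_self _) h1
    constructor
    · nlinarith [sq_nonneg l, sq_nonneg (l+1)]
    · nlinarith [sq_nonneg l, sq_nonneg (l+1)]
  · rintro ⟨hl1, hl2⟩ κ _
    set c := Real.cos (Real.pi * κ) with hc
    set s := Real.sin (Real.pi * κ) with hs
    have hsc : s ^ 2 = 1 - c ^ 2 := by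
      have := Real.sin_sq_add_cos_sq (Real.pi * κ); nlinarith [this]
    have hc1 : -1 ≤ c := Real.neg_one_le_cos _
    have hc2 : c ≤ 1 := Real.cos_le_one _
    have hexp : Complex.exp (Complex.I * Real.pi * κ)
        = (c : ℂ) + (s : ℂ) * Complex.I := by
      rw [show Complex.I * (Real.pi : ℂ) * (κ : ℂ) = ((Real.pi * κ : ℝ) : ℂ) * Complex.I by
        push_cast; ring, Complex.exp_mul_I, hc, hs]
      simp [Complex.ofReal_cos, Complex.ofReal_sin]
    set G := (1 : ℂ) + forward1Lambda l κ + forward1Lambda l κ ^ 2 / 2 with hG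
    set a := l * (1 - c) with ha
    set b := -(l * s) with hb
    have hGval : G = ((1 + a + (a^2 - b^2)/2 : ℝ) : ℂ) + ((b * (1 + a) : ℝ) : ℂ) * Complex.I := by
      rw [hG, forward1Lambda, hexp, ha, hb]
      push_cast
      linear_combination ((l : ℂ)^2 * (s : ℂ)^2 / 2) * Complex.I_sq
    have habs2 : ‖G‖ ^ 2
        = (1 + a + (a^2 - b^2)/2)^2 + (b * (1 + a))^2 := by
      rw [Complex.sq_norm, hGval, Complex.normSq_add_mul_I]
    set t := 1 - c with htdef
    have ht0 : 0 ≤ t := by simp [htdef]; linarith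
    have ht2 : t ≤ 2 := by simp [htdef]; linarith
    have key : ‖G‖ ^ 2 - 1 = t * (2*l + l^2 * t * (l^2 + 2*l + 2)) := by
      rw [habs2, ha, hb, htdef]
      linear_combination (l^4 * (s^2 + 1 - c^2)/4 + l^2 * (l*(1-c) + (l*(1-c))^2/2)) * hsc
    have hinner : 2*l + l^2 * t * (l^2 + 2*l + 2) ≤ 0 := by
      have hA : 0 ≤ (2 - t) * (l^2 * (l^2 + 2*l + 2)) := by
        apply mul_nonneg (by linarith)
        nlinarith [sq_nonneg l, sq_nonneg (l*(l+1))]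
      have hB : 0 ≤ (-l) * ((l+1) * (l^2 + l + 1)) := by
        apply mul_nonneg (by linarith)
        apply mul_nonneg (by linarith)
        nlinarith [sq_nonneg (l+1), sq_nonneg l]
      nlinarith [hA, hB]
    have htot : ‖G‖ ^ 2 ≤ 1 := by
      have := mul_nonpos_of_nonneg_of_nonpos ht0 hinner
      linarith [key, this]
    nlinarith [norm_nonneg G, htot]
end
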